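/- arXiv:1512.02847 — 5 statements merged into one kernel-verified Lean document; each statement's English description precedes it below -/
import Mathlib

section
/- Let (D_α)_{α∈ℕⁿ} be a finitely supported family of smooth functions ℝ → ℝ and let b(F) = Σ_α D_α F^{(α)} be the associated multilinear differential operator. Then for every polynomial h of degree ≤ 2, all smooth f_1,…,f_n : ℝ → ℝ and all x ∈ ℝ, the coboundary satisfies ∂b(X_h, F)(x) = Σ_α D_α′(x) h(x) F^{(α)}(x) + Σ_α (δ − |α|) D_α(x) h′(x) F^{(α)}(x) − (1/2) Σ_α Σ_{i=1}^n α_i(α_i + 2λ_i − 1) D_α(x) h″(x) F^{(α^{-i})}(x), where terms involving α^{-i} are omitted when α_i = 0. -/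
open scoped BigOperators

noncomputable section

/-- `h` is (the coefficient of) an element of `sl(2)`: a polynomial of degree ≤ 2. -/
def IsSl2 (h : ℝ → ℝ) : Prop := ∃ a b c : ℝ, h = fun x => a + b * x + c * x ^ 2

/-- `F^{(α)}(x) = f₁^{(α₁)}(x) ⋯ f_n^{(α_n)}(x)`. -/
def Fder (n : ℕ) (F : Fin n → ℝ → ℝ) (α : Fin n → ℕ) (x : ℝ) : ℝ :=
  ∏ i, iteratedDeriv (α i) (F i) x

/-- The multilinear differential operator `b(F) = Σ_α D_α F^{(α)}` associated with a
finitely supported family of coefficient functions `D`. -/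
def opOf (n : ℕ) (D : (Fin n → ℕ) → ℝ → ℝ) (F : Fin n → ℝ → ℝ) (x : ℝ) : ℝ :=
  ∑ᶠ α : Fin n → ℕ, D α x * Fder n F α x

/-- The sl(2)-action `(X_h · A)(F) = h (A F)' + μ h' (A F) − Σᵢ A(f₁,…, h fᵢ' + λᵢ h' fᵢ, …, f_n)`
of `X_h` on a multilinear operator `A`. -/
def act (n : ℕ) (lam : Fin n → ℝ) (μ : ℝ) (A : (Fin n → ℝ → ℝ) → ℝ → ℝ)
    (h : ℝ → ℝ) (F : Fin n → ℝ → ℝ) (x : ℝ) : ℝ :=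
  h x * deriv (A F) x + μ * deriv h x * A F x
    - ∑ i, A (Function.update F i (fun y => h y * deriv (F i) y + lam i * deriv h y * F i y)) x

/-- The coboundary `∂b(X_h, F)` of the operator `b` with coefficients `D`. -/
def cobound (n : ℕ) (lam : Fin n → ℝ) (μ : ℝ) (D : (Fin n → ℕ) → ℝ → ℝ)
    (h : ℝ → ℝ) (F : Fin n → ℝ → ℝ) (x : ℝ) : ℝ :=
  act n lam μ (fun G y => opOf n D G y) h F x

open scoped ContDiff

namespace CoboundAux

lemma smooth_iter {f : ℝ → ℝ} (hf : ContDiff ℝ ∞ f) (m : ℕ) :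
    ContDiff ℝ ∞ (iteratedDeriv m f) := by
  rw [iteratedDeriv_eq_iterate]; exact hf.iterate_deriv m

lemma hasDerivAt_iter {f : ℝ → ℝ} (hf : ContDiff ℝ ∞ f) (m : ℕ) (x : ℝ) :
    HasDerivAt (iteratedDeriv m f) (iteratedDeriv (m + 1) f x) x := by
  rw [iteratedDeriv_succ]
  exact (((smooth_iter hf m).differentiable (by norm_num)) x).hasDerivAt

lemma hasDerivAt_h (a b c : ℝ) (x : ℝ) :
    HasDerivAt (fun y : ℝ => a + b * y + c * y ^ 2) (b + 2 * c * x) x := by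
  have := ((hasDerivAt_const x a).add ((hasDerivAt_id x).const_mul b)).add
    ((hasDerivAt_pow 2 x).const_mul c)
  refine this.congr_deriv ?_
  push_cast; ring

lemma hasDerivAt_h' (b c : ℝ) (x : ℝ) :
    HasDerivAt (fun y : ℝ => b + 2 * c * y) (2 * c) x := by
  have := (hasDerivAt_const x b).add ((hasDerivAt_id x).const_mul (2 * c))
  refine this.congr_deriv ?_
  ring

lemma deriv_zero_fun (x : ℝ) : deriv (0 : ℝ → ℝ) x = 0 := by
  rw [show (0 : ℝ → ℝ) = fun _ => (0:ℝ) from rfl, deriv_const]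

lemma leibniz (a b c lam : ℝ) {f : ℝ → ℝ} (hf : ContDiff ℝ ∞ f) (k : ℕ) (x : ℝ) :
    iteratedDeriv k
        (fun y => (a + b * y + c * y ^ 2) * deriv f y + lam * (b + 2 * c * y) * f y) x
      = (a + b * x + c * x ^ 2) * iteratedDeriv (k + 1) f x
        + ((k : ℝ) + lam) * (b + 2 * c * x) * iteratedDeriv k f x
        + (1 / 2 * (k : ℝ) * ((k : ℝ) + 2 * lam - 1)) * (2 * c) * iteratedDeriv (k - 1) f x := by
  induction k generalizing x with
  | zero =>
      simp [iteratedDeriv_zero, iteratedDeriv_one]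
  | succ k ih =>
      rw [iteratedDeriv_succ]
      have hfun : iteratedDeriv k
          (fun y => (a + b * y + c * y ^ 2) * deriv f y + lam * (b + 2 * c * y) * f y)
          = fun y => (a + b * y + c * y ^ 2) * iteratedDeriv (k + 1) f y
            + ((k : ℝ) + lam) * (b + 2 * c * y) * iteratedDeriv k f y
            + (1 / 2 * (k : ℝ) * ((k : ℝ) + 2 * lam - 1)) * (2 * c) * iteratedDeriv (k - 1) f y :=
        funext fun y => ih y
      rw [hfun]
      have H : HasDerivAt
          (fun y => (a + b * y + c * y ^ 2) * iteratedDeriv (k + 1) f y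
            + ((k : ℝ) + lam) * (b + 2 * c * y) * iteratedDeriv k f y
            + (1 / 2 * (k : ℝ) * ((k : ℝ) + 2 * lam - 1)) * (2 * c) * iteratedDeriv (k - 1) f y)
          (((b + 2 * c * x) * iteratedDeriv (k + 1) f x
              + (a + b * x + c * x ^ 2) * iteratedDeriv (k + 2) f x)
            + ((((k : ℝ) + lam) * (2 * c)) * iteratedDeriv k f x
              + (((k : ℝ) + lam) * (b + 2 * c * x)) * iteratedDeriv (k + 1) f x)
            + (1 / 2 * (k : ℝ) * ((k : ℝ) + 2 * lam - 1) * (2 * c))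
                * iteratedDeriv (k - 1 + 1) f x) x := by
        exact (((hasDerivAt_h a b c x).mul (hasDerivAt_iter hf (k + 1) x)).add
          (((hasDerivAt_h' b c x).const_mul ((k : ℝ) + lam)).mul (hasDerivAt_iter hf k x))).add
          ((hasDerivAt_iter hf (k - 1) x).const_mul
            (1 / 2 * (k : ℝ) * ((k : ℝ) + 2 * lam - 1) * (2 * c)))
      rw [H.deriv]
      have h3 : (1 / 2 * (k : ℝ) * ((k : ℝ) + 2 * lam - 1) * (2 * c))
            * iteratedDeriv (k - 1 + 1) f x
          = (1 / 2 * (k : ℝ) * ((k : ℝ) + 2 * lam - 1) * (2 * c)) * iteratedDeriv k f x := by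
        cases k with
        | zero => norm_num
        | succ m => rfl
      rw [h3]
      have h4 : k + 1 - 1 = k := rfl
      rw [h4]
      push_cast
      ring

lemma Fder_update {n : ℕ} (F : Fin n → ℝ → ℝ) (α : Fin n → ℕ) (i : Fin n) (m : ℕ) (x : ℝ) :
    Fder n F (Function.update α i m) x
      = iteratedDeriv m (F i) x * ∏ j ∈ Finset.univ.erase i, iteratedDeriv (α j) (F j) x := by
  unfold Fder
  rw [← Finset.mul_prod_erase Finset.univ _ (Finset.mem_univ i), Function.update_self]
  congr 1
  exact Finset.prod_congr rfl fun j hj => by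
    rw [Function.update_of_ne (Finset.ne_of_mem_erase hj)]

lemma Fder_split {n : ℕ} (F : Fin n → ℝ → ℝ) (α : Fin n → ℕ) (i : Fin n) (x : ℝ) :
    Fder n F α x
      = iteratedDeriv (α i) (F i) x * ∏ j ∈ Finset.univ.erase i, iteratedDeriv (α j) (F j) x :=
  (Finset.mul_prod_erase Finset.univ _ (Finset.mem_univ i)).symm

lemma Fder_updateF {n : ℕ} (F : Fin n → ℝ → ℝ) (g : ℝ → ℝ) (i : Fin n) (α : Fin n → ℕ) (x : ℝ) :
    Fder n (Function.update F i g) α x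
      = iteratedDeriv (α i) g x * ∏ j ∈ Finset.univ.erase i, iteratedDeriv (α j) (F j) x := by
  unfold Fder
  rw [← Finset.mul_prod_erase Finset.univ _ (Finset.mem_univ i), Function.update_self]
  congr 1
  exact Finset.prod_congr rfl fun j hj => by
    rw [Function.update_of_ne (Finset.ne_of_mem_erase hj)]

lemma hasDerivAt_Fder {n : ℕ} (F : Fin n → ℝ → ℝ) (hF : ∀ i, ContDiff ℝ ∞ (F i))
    (α : Fin n → ℕ) (x : ℝ) :
    HasDerivAt (fun y => Fder n F α y)
      (∑ i, Fder n F (Function.update α i (α i + 1)) x) x := by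
  have H := HasDerivAt.finset_prod (u := Finset.univ)
      (f := fun i y => iteratedDeriv (α i) (F i) y)
      (f' := fun i => iteratedDeriv (α i + 1) (F i) x) (x := x)
      (fun i _ => hasDerivAt_iter (hF i) (α i) x)
  have e : (∑ i ∈ Finset.univ,
        (∏ j ∈ Finset.univ.erase i, iteratedDeriv (α j) (F j) x)
          • iteratedDeriv (α i + 1) (F i) x)
      = ∑ i, Fder n F (Function.update α i (α i + 1)) x := by
    refine Finset.sum_congr rfl fun i _ => ?_
    rw [Fder_update, smul_eq_mul, mul_comm]
  rw [e] at H
  have ef : (fun y => Fder n F α y) = ∏ i, fun y => iteratedDeriv (α i) (F i) y := by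
    ext y; simp only [Fder, Finset.prod_apply]
  rw [ef]
  exact H

end CoboundAux

/-- formula (4) of the paper: the explicit formula for the coboundary
`∂b(X_h,F)`.  (Terms in `F^{(α^{-i})}` with `α i = 0` carry coefficient
`α_i (α_i + 2λ_i − 1) = 0`, i.e. they are omitted, and `Function.update α i (α i - 1)`
with truncated subtraction is then harmless.) -/
theorem coboundary_formula (n : ℕ) (hn : 1 ≤ n) (lam : Fin n → ℝ) (μ : ℝ)
    (D : (Fin n → ℕ) → ℝ → ℝ)
    (hDfin : {α | D α ≠ 0}.Finite)
    (hDsmooth : ∀ α, ContDiff ℝ (⊤ : ℕ∞) (D α))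
    (h : ℝ → ℝ) (hh : IsSl2 h)
    (F : Fin n → ℝ → ℝ) (hF : ∀ i, ContDiff ℝ (⊤ : ℕ∞) (F i)) (x : ℝ) :
    cobound n lam μ D h F x =
      (∑ᶠ α : Fin n → ℕ, deriv (D α) x * h x * Fder n F α x)
      + (∑ᶠ α : Fin n → ℕ,
          ((μ - ∑ i, lam i) - ∑ i, (α i : ℝ)) * D α x * deriv h x * Fder n F α x)
      - (1 / 2) * ∑ᶠ α : Fin n → ℕ, ∑ i,
          (α i : ℝ) * ((α i : ℝ) + 2 * lam i - 1) * D α x * deriv (deriv h) x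
            * Fder n F (Function.update α i (α i - 1)) x := by
  obtain ⟨a, b, c, rfl⟩ := hh
  have hF' : ∀ i, ContDiff ℝ ∞ (F i) := fun i => (hF i).of_le (by simp)
  have hD' : ∀ α, ContDiff ℝ ∞ (D α) := fun α => (hDsmooth α).of_le (by simp)
  set S : Finset (Fin n → ℕ) := hDfin.toFinset with hS
  have hDzero : ∀ α ∉ S, D α = 0 := fun α hα =>
    not_not.mp fun h0 => hα (hDfin.mem_toFinset.mpr h0)
  have hd : deriv (fun y : ℝ => a + b * y + c * y ^ 2) = fun y => b + 2 * c * y :=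
    funext fun y => (CoboundAux.hasDerivAt_h a b c y).deriv
  have hdd : deriv (fun y : ℝ => b + 2 * c * y) = fun _ => 2 * c :=
    funext fun y => (CoboundAux.hasDerivAt_h' b c y).deriv
  have hop : ∀ (G : Fin n → ℝ → ℝ) (y : ℝ),
      opOf n D G y = ∑ α ∈ S, D α y * Fder n G α y := by
    intro G y
    refine finsum_eq_finset_sum_of_support_subset _ ?_
    intro α hα
    by_contra hm
    rw [Function.mem_support] at hα
    exact hα (by rw [hDzero α hm]; simp)
  have hB : HasDerivAt (fun y => opOf n D F y)
      (∑ α ∈ S, (deriv (D α) x * Fder n F α x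
        + D α x * ∑ i, Fder n F (Function.update α i (α i + 1)) x)) x := by
    have e : (fun y => opOf n D F y) = fun y => ∑ α ∈ S, D α y * Fder n F α y :=
      funext fun y => hop F y
    rw [e]
    exact HasDerivAt.fun_sum fun α _ =>
      (((hD' α).differentiable (by norm_num) x).hasDerivAt).fun_mul
        (CoboundAux.hasDerivAt_Fder F hF' α x)
  have hsub : ∀ i : Fin n,
      opOf n D (Function.update F i
        (fun y => (a + b * y + c * y ^ 2) * deriv (F i) y
          + lam i * (b + 2 * c * y) * F i y)) x
      = ∑ α ∈ S, D α x *
          ((a + b * x + c * x ^ 2) * Fder n F (Function.update α i (α i + 1)) x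
            + ((α i : ℝ) + lam i) * (b + 2 * c * x) * Fder n F α x
            + (1 / 2 * (α i : ℝ) * ((α i : ℝ) + 2 * lam i - 1)) * (2 * c)
                * Fder n F (Function.update α i (α i - 1)) x) := by
    intro i
    rw [hop]
    refine Finset.sum_congr rfl fun α _ => ?_
    rw [CoboundAux.Fder_updateF, CoboundAux.leibniz a b c (lam i) (hF' i) (α i) x,
      CoboundAux.Fder_update F α i (α i + 1) x, CoboundAux.Fder_update F α i (α i - 1) x,
      CoboundAux.Fder_split F α i x]
    ring
  have hR1 : (∑ᶠ α : Fin n → ℕ,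
        deriv (D α) x * (a + b * x + c * x ^ 2) * Fder n F α x)
      = ∑ α ∈ S, deriv (D α) x * (a + b * x + c * x ^ 2) * Fder n F α x := by
    refine finsum_eq_finset_sum_of_support_subset _ ?_
    intro α hα
    by_contra hm
    rw [Function.mem_support] at hα
    exact hα (by rw [hDzero α hm, CoboundAux.deriv_zero_fun]; ring)
  have hR2 : (∑ᶠ α : Fin n → ℕ,
        ((μ - ∑ i, lam i) - ∑ i, (α i : ℝ)) * D α x * (b + 2 * c * x) * Fder n F α x)
      = ∑ α ∈ S, ((μ - ∑ i, lam i) - ∑ i, (α i : ℝ)) * D α x * (b + 2 * c * x)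
          * Fder n F α x := by
    refine finsum_eq_finset_sum_of_support_subset _ ?_
    intro α hα
    by_contra hm
    rw [Function.mem_support] at hα
    exact hα (by rw [hDzero α hm]; simp)
  have hR3 : (∑ᶠ α : Fin n → ℕ, ∑ i,
        (α i : ℝ) * ((α i : ℝ) + 2 * lam i - 1) * D α x * (2 * c)
          * Fder n F (Function.update α i (α i - 1)) x)
      = ∑ α ∈ S, ∑ i,
        (α i : ℝ) * ((α i : ℝ) + 2 * lam i - 1) * D α x * (2 * c)
          * Fder n F (Function.update α i (α i - 1)) x := by
    refine finsum_eq_finset_sum_of_support_subset _ ?_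
    intro α hα
    by_contra hm
    rw [Function.mem_support] at hα
    refine hα (Finset.sum_eq_zero fun i _ => ?_)
    rw [hDzero α hm]; simp
  unfold cobound act
  simp only [hd, hdd]
  rw [hB.deriv, hop F x]
  simp only [hsub]
  rw [hR1, hR2, hR3]
  conv_lhs => rw [Finset.sum_comm]
  rw [Finset.mul_sum, Finset.mul_sum, ← Finset.sum_add_distrib, ← Finset.sum_sub_distrib]
  conv_rhs => rw [Finset.mul_sum, ← Finset.sum_add_distrib, ← Finset.sum_sub_distrib]
  refine Finset.sum_congr rfl fun α _ => ?_
  have key : (∑ i, D α x *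
        ((a + b * x + c * x ^ 2) * Fder n F (Function.update α i (α i + 1)) x
          + ((α i : ℝ) + lam i) * (b + 2 * c * x) * Fder n F α x
          + 1 / 2 * (α i : ℝ) * ((α i : ℝ) + 2 * lam i - 1) * (2 * c)
              * Fder n F (Function.update α i (α i - 1)) x))
      = D α x * ((a + b * x + c * x ^ 2)
            * ∑ i, Fder n F (Function.update α i (α i + 1)) x)
        + ((∑ i, (α i : ℝ)) + ∑ i, lam i) * (D α x * (b + 2 * c * x) * Fder n F α x)
        + 1 / 2 * ∑ i, (α i : ℝ) * ((α i : ℝ) + 2 * lam i - 1) * D α x * (2 * c)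
            * Fder n F (Function.update α i (α i - 1)) x := by
    have e1 : (∑ i, D α x
          * ((a + b * x + c * x ^ 2) * Fder n F (Function.update α i (α i + 1)) x))
        = D α x * ((a + b * x + c * x ^ 2)
            * ∑ i, Fder n F (Function.update α i (α i + 1)) x) := by
      rw [← Finset.mul_sum, ← Finset.mul_sum]
    have e2 : (∑ i, D α x
          * (((α i : ℝ) + lam i) * (b + 2 * c * x) * Fder n F α x))
        = ((∑ i, (α i : ℝ)) + ∑ i, lam i)
            * (D α x * (b + 2 * c * x) * Fder n F α x) := by
      rw [← Finset.sum_add_distrib, Finset.sum_mul]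
      exact Finset.sum_congr rfl fun i _ => by ring
    have e3 : (∑ i, D α x
          * (1 / 2 * (α i : ℝ) * ((α i : ℝ) + 2 * lam i - 1) * (2 * c)
              * Fder n F (Function.update α i (α i - 1)) x))
        = 1 / 2 * ∑ i, (α i : ℝ) * ((α i : ℝ) + 2 * lam i - 1) * D α x * (2 * c)
            * Fder n F (Function.update α i (α i - 1)) x := by
      rw [Finset.mul_sum]
      exact Finset.sum_congr rfl fun i _ => by ring
    calc (∑ i, D α x *
        ((a + b * x + c * x ^ 2) * Fder n F (Function.update α i (α i + 1)) x
          + ((α i : ℝ) + lam i) * (b + 2 * c * x) * Fder n F α x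
          + 1 / 2 * (α i : ℝ) * ((α i : ℝ) + 2 * lam i - 1) * (2 * c)
              * Fder n F (Function.update α i (α i - 1)) x))
        = (∑ i, D α x
            * ((a + b * x + c * x ^ 2) * Fder n F (Function.update α i (α i + 1)) x))
          + (∑ i, D α x
            * (((α i : ℝ) + lam i) * (b + 2 * c * x) * Fder n F α x))
          + ∑ i, D α x
            * (1 / 2 * (α i : ℝ) * ((α i : ℝ) + 2 * lam i - 1) * (2 * c)
              * Fder n F (Function.update α i (α i - 1)) x) := by
          rw [← Finset.sum_add_distrib, ← Finset.sum_add_distrib]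
          exact Finset.sum_congr rfl fun i _ => by ring
      _ = _ := by rw [e1, e2, e3]
  rw [key]
  ring
end
end

section
/- Suppose δ = k ∈ ℕ. Let (B_α) be real constants indexed by {α ∈ ℕⁿ : |α| = k}, not all zero, and let (C_β) be any real constants indexed by {β ∈ ℕⁿ : |β| = k − 1}. Then the 1-cochain c(X_h, F)(x) = Σ_{|α|=k} B_α h′(x) F^{(α)}(x) + Σ_{|β|=k−1} C_β h″(x) F^{(β)}(x) is not a coboundary: there is no finitely supported family (D_α) of smooth functions ℝ → ℝ such that c(X_h, F)(x) = ∂b(X_h, F)(x) for every polynomial h of degree ≤ 2, all smooth F and all x, where b(F) = Σ_α D_α F^{(α)}. -/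
open scoped BigOperators

noncomputable section

/-- The 1-cocycle condition for a 1-cochain `c` on sl(2) with values in `D_{λ,μ}`. -/
def IsCocycle (n : ℕ) (lam : Fin n → ℝ) (μ : ℝ)
    (c : (ℝ → ℝ) → (Fin n → ℝ → ℝ) → ℝ → ℝ) : Prop :=
  ∀ h₁ h₂ : ℝ → ℝ, IsSl2 h₁ → IsSl2 h₂ →
    ∀ F : Fin n → ℝ → ℝ, (∀ i, ContDiff ℝ (⊤ : ℕ∞) (F i)) → ∀ x : ℝ,
      c (fun y => h₁ y * deriv h₂ y - deriv h₁ y * h₂ y) F x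
        = act n lam μ (c h₂) h₁ F x - act n lam μ (c h₁) h₂ F x

set_option linter.unusedVariables false

lemma iterDeriv_monomial (m j : ℕ) :
    iteratedDeriv j (fun y : ℝ => y ^ m) = fun y => (m.descFactorial j : ℝ) * y ^ (m - j) := by
  induction j with
  | zero => simp
  | succ j ih =>
      rw [iteratedDeriv_succ, ih]
      funext y
      rw [deriv_const_mul _ (differentiable_pow _).differentiableAt, deriv_pow_field,
        Nat.descFactorial_succ]
      push_cast
      rw [Nat.sub_sub]
      ring

lemma iterDeriv_monomial_zero (m j : ℕ) :
    iteratedDeriv j (fun y : ℝ => y ^ m) 0 = if j = m then (m.factorial : ℝ) else 0 := by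
  rw [iterDeriv_monomial]
  rcases lt_trichotomy j m with hlt | rfl | hgt
  · simp only [if_neg hlt.ne]
    rw [zero_pow (by omega : m - j ≠ 0), mul_zero]
  · simp [Nat.descFactorial_self]
  · rw [if_neg hgt.ne', Nat.descFactorial_eq_zero_iff_lt.mpr hgt]
    simp

lemma iterDeriv_const_mul_monomial (c : ℝ) (m j : ℕ) :
    iteratedDeriv j (fun y : ℝ => c * y ^ m)
      = fun y => c * ((m.descFactorial j : ℝ) * y ^ (m - j)) := by
  induction j with
  | zero => simp
  | succ j ih =>
      rw [iteratedDeriv_succ, ih]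
      funext y
      rw [deriv_const_mul _ ((differentiable_pow _).const_mul _).differentiableAt,
        deriv_const_mul _ (differentiable_pow _).differentiableAt, deriv_pow_field,
        Nat.descFactorial_succ]
      push_cast
      rw [Nat.sub_sub]
      ring

/-- Theorem 2.2, part 3: if `δ = k ∈ ℕ` and the constants `B_α`
(indexed by `|α| = k`, not all zero) together with arbitrary constants `C_β` (indexed by
`|β| = k−1`) define the 1-cochain
`c(X_h,F) = Σ_{|α|=k} B_α h' F^{(α)} + Σ_{|β|=k−1} C_β h'' F^{(β)}`, then `c` is not a
coboundary. -/
theorem cocycle_nontrivial (n : ℕ) (hn : 1 ≤ n) (lam : Fin n → ℝ) (μ : ℝ)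
    (k : ℕ) (hδ : μ - ∑ i, lam i = (k : ℝ))
    (B C : (Fin n → ℕ) → ℝ)
    (hBsupp : ∀ α : Fin n → ℕ, (∑ i, α i) ≠ k → B α = 0)
    (hBne : ∃ α : Fin n → ℕ, B α ≠ 0)
    (hCsupp : ∀ β : Fin n → ℕ, (∑ i, (β i : ℤ)) ≠ (k : ℤ) - 1 → C β = 0) :
    ¬ ∃ D : (Fin n → ℕ) → ℝ → ℝ,
        {α | D α ≠ 0}.Finite ∧ (∀ α, ContDiff ℝ (⊤ : ℕ∞) (D α)) ∧
        ∀ h : ℝ → ℝ, IsSl2 h → ∀ F : Fin n → ℝ → ℝ, (∀ i, ContDiff ℝ (⊤ : ℕ∞) (F i)) → ∀ x : ℝ,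
          (∑ᶠ α ∈ {α : Fin n → ℕ | (∑ i, α i) = k},
              B α * deriv h x * Fder n F α x)
            + (∑ᶠ β ∈ {β : Fin n → ℕ | (∑ i, (β i : ℤ)) = (k : ℤ) - 1},
                C β * deriv (deriv h) x * Fder n F β x)
          = cobound n lam μ D h F x := by
  rintro ⟨D, hDfin, hDsmooth, hEq⟩
  obtain ⟨α₀, hα₀⟩ := hBne
  have hk : ∑ i, α₀ i = k := by
    by_contra hcon; exact hα₀ (hBsupp _ hcon)
  -- the element h(y) = y of sl2
  set h : ℝ → ℝ := fun y => 0 + 1 * y + 0 * y ^ 2 with hhdef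
  have hsl : IsSl2 h := ⟨0, 1, 0, rfl⟩
  have hid : h = fun y => y := by funext y; simp [hhdef]
  have hh0 : h 0 = 0 := by rw [hid]
  have hd1 : deriv h = fun _ => (1 : ℝ) := by
    rw [hid]; funext y; exact deriv_id y
  have hd1' : ∀ y : ℝ, deriv h y = 1 := fun y => by rw [hd1]
  have hd2' : deriv (deriv h) 0 = 0 := by rw [hd1]; exact deriv_const 0 1
  -- the test functions
  set F : Fin n → ℝ → ℝ := fun i y => y ^ (α₀ i) with hFdef
  have hFi : ∀ i, F i = fun y => y ^ (α₀ i) := fun i => rfl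
  have hFsmooth : ∀ i, ContDiff ℝ (⊤ : ℕ∞) (F i) := fun i => contDiff_id.pow _
  set M : ℝ := ∏ i, ((α₀ i).factorial : ℝ) with hMdef
  have hMne : M ≠ 0 :=
    Finset.prod_ne_zero_iff.mpr fun i _ => Nat.cast_ne_zero.mpr (Nat.factorial_ne_zero _)
  have hFder : ∀ α : Fin n → ℕ, Fder n F α 0 = if α = α₀ then M else 0 := by
    intro α
    by_cases hα : α = α₀
    · subst hα
      rw [if_pos rfl]
      exact Finset.prod_congr rfl fun i _ => by
        rw [hFi i, iterDeriv_monomial_zero, if_pos rfl]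
    · rw [if_neg hα]
      obtain ⟨i, hi⟩ := Function.ne_iff.mp hα
      exact Finset.prod_eq_zero (Finset.mem_univ i)
        (by rw [hFi i, iterDeriv_monomial_zero, if_neg hi])
  -- the updated entries
  have hg : ∀ i : Fin n,
      (fun y => h y * deriv (F i) y + lam i * deriv h y * F i y)
        = fun y => ((α₀ i : ℝ) + lam i) * y ^ (α₀ i) := by
    intro i
    funext y
    rw [hd1' y, hid, hFi i]
    simp only [deriv_pow_field]
    cases hm : α₀ i with
    | zero => simp
    | succ m => rw [pow_succ]; push_cast; ring
  -- Fder of the updated family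
  have hFderU : ∀ (i : Fin n) (α : Fin n → ℕ),
      Fder n (Function.update F i (fun y => h y * deriv (F i) y + lam i * deriv h y * F i y)) α 0
        = ((α₀ i : ℝ) + lam i) * Fder n F α 0 := by
    intro i α
    have hfac : ∀ j : Fin n,
        iteratedDeriv (α j)
          (Function.update F i (fun y => h y * deriv (F i) y + lam i * deriv h y * F i y) j) 0
          = (if j = i then ((α₀ i : ℝ) + lam i) else 1) * iteratedDeriv (α j) (F j) 0 := by
      intro j
      rcases eq_or_ne j i with rfl | hj
      · rw [Function.update_self, hg j, if_pos rfl, hFi j,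
          iterDeriv_const_mul_monomial, iterDeriv_monomial]
      · rw [Function.update_of_ne hj, if_neg hj, one_mul]
    unfold Fder
    calc (∏ j, iteratedDeriv (α j)
            (Function.update F i (fun y => h y * deriv (F i) y + lam i * deriv h y * F i y) j) 0)
        = ∏ j, (if j = i then ((α₀ i : ℝ) + lam i) else 1) * iteratedDeriv (α j) (F j) 0 :=
          Finset.prod_congr rfl fun j _ => hfac j
      _ = (∏ j, if j = i then ((α₀ i : ℝ) + lam i) else 1)
            * ∏ j, iteratedDeriv (α j) (F j) 0 := Finset.prod_mul_distrib
      _ = ((α₀ i : ℝ) + lam i) * ∏ j, iteratedDeriv (α j) (F j) 0 := by simp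
  -- values of the operator
  have hop0 : opOf n D F 0 = D α₀ 0 * M := by
    unfold opOf
    rw [finsum_eq_single _ α₀ (fun α hα => by rw [hFder α, if_neg hα, mul_zero]),
      hFder α₀, if_pos rfl]
  have hopU : ∀ i : Fin n,
      opOf n D (Function.update F i
          (fun y => h y * deriv (F i) y + lam i * deriv h y * F i y)) 0
        = ((α₀ i : ℝ) + lam i) * (D α₀ 0 * M) := by
    intro i
    unfold opOf
    rw [finsum_eq_single _ α₀
        (fun α hα => by rw [hFderU i α, hFder α, if_neg hα, mul_zero, mul_zero]),
      hFderU i α₀, hFder α₀, if_pos rfl]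
    ring
  -- the key identity at x = 0
  have key := hEq h hsl F hFsmooth 0
  -- left-hand side
  have hL1 : (∑ᶠ α ∈ {α : Fin n → ℕ | (∑ i, α i) = k},
      B α * deriv h 0 * Fder n F α 0) = B α₀ * M := by
    rw [finsum_mem_def, finsum_eq_single _ α₀ ?_]
    · rw [Set.indicator_of_mem (by exact hk), hFder α₀, if_pos rfl, hd1' 0, mul_one]
    · intro α hα
      by_cases hmem : α ∈ {α : Fin n → ℕ | (∑ i, α i) = k}
      · rw [Set.indicator_of_mem hmem, hFder α, if_neg hα, mul_zero]
      · exact Set.indicator_of_notMem hmem _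
  have hL2 : (∑ᶠ β ∈ {β : Fin n → ℕ | (∑ i, (β i : ℤ)) = (k : ℤ) - 1},
      C β * deriv (deriv h) 0 * Fder n F β 0) = 0 :=
    finsum_mem_eq_zero_of_forall_eq_zero fun β _ => by rw [hd2', mul_zero, zero_mul]
  -- right-hand side
  have hsum : ∑ i, ((α₀ i : ℝ) + lam i) = (k : ℝ) + ∑ i, lam i := by
    rw [Finset.sum_add_distrib, ← Nat.cast_sum, hk]
  have hR : cobound n lam μ D h F 0
      = μ * (D α₀ 0 * M) - ((k : ℝ) + ∑ i, lam i) * (D α₀ 0 * M) := by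
    simp only [cobound, act]
    rw [hh0, zero_mul, hd1' 0, hop0,
      show (∑ i, opOf n D (Function.update F i
          (fun y => h y * deriv (F i) y + lam i * deriv h y * F i y)) 0)
        = ∑ i, ((α₀ i : ℝ) + lam i) * (D α₀ 0 * M) from
        Finset.sum_congr rfl fun i _ => hopU i,
      ← Finset.sum_mul, hsum]
    ring
  rw [hL1, hL2, add_zero, hR] at key
  have hfin : B α₀ * M = 0 := by linear_combination key + (D α₀ 0 * M) * hδ
  exact hα₀ ((mul_eq_zero.mp hfin).resolve_right hMne)
end
end

section
/- Let (a_α)_{α∈ℕⁿ} be a finitely supported family of functions ℝ → ℝ. If Σ_α a_α(x) F^{(α)}(x) = 0 for all smooth functions f_1,…,f_n : ℝ → ℝ and all x ∈ ℝ, then a_α = 0 for every α ∈ ℕⁿ. (Uniqueness of the coefficients of a multilinear differential operator.) -/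
open scoped BigOperators

noncomputable section

lemma iteratedDeriv_exp_mul (t : ℝ) (k : ℕ) :
    iteratedDeriv k (fun y : ℝ => Real.exp (t * y)) = fun x => t ^ k * Real.exp (t * x) := by
  induction k with
  | zero => simp [iteratedDeriv_zero]
  | succ k ih =>
    rw [iteratedDeriv_succ, ih]
    funext x
    have h1 : HasDerivAt (fun y : ℝ => t * y) t x := by
      simpa using (hasDerivAt_id x).const_mul t
    have h2 : HasDerivAt (fun y : ℝ => Real.exp (t * y)) (Real.exp (t * x) * t) x :=
      (Real.hasDerivAt_exp (t * x)).comp x h1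
    have h3 : HasDerivAt (fun y : ℝ => t ^ k * Real.exp (t * y))
        (t ^ (k + 1) * Real.exp (t * x)) x := by
      have := h2.const_mul (t ^ k)
      convert this using 1
      exacts [rfl, rfl, by ring]
    exact h3.deriv

/-- uniqueness of the coefficients of a multilinear differential
operator: if `Σ_α a_α(x) F^{(α)}(x) = 0` for all smooth `F = (f₁,…,f_n)` and all `x`,
then every coefficient `a_α` vanishes identically. -/
theorem coefficients_unique (n : ℕ) (hn : 1 ≤ n)
    (a : (Fin n → ℕ) → ℝ → ℝ) (hafin : {α | a α ≠ 0}.Finite)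
    (hzero : ∀ F : Fin n → ℝ → ℝ, (∀ i, ContDiff ℝ (⊤ : ℕ∞) (F i)) → ∀ x : ℝ,
      (∑ᶠ α : Fin n → ℕ, a α x * Fder n F α x) = 0) :
    ∀ α : Fin n → ℕ, a α = 0 := by
  classical
  intro α
  by_cases hα : α ∈ hafin.toFinset
  swap
  · simpa using hα
  funext x
  set s := hafin.toFinset with hs
  -- Key claim: the polynomial identity in `t`.
  have key : ∀ t : Fin n → ℝ, (∑ β ∈ s, a β x * ∏ i, (t i) ^ (β i)) = 0 := by
    intro t
    have hsmooth : ∀ i, ContDiff ℝ (⊤ : ℕ∞) (fun y : ℝ => Real.exp (t i * y)) := fun i =>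
      Real.contDiff_exp.comp (contDiff_const.mul contDiff_id)
    have h0 := hzero (fun i y => Real.exp (t i * y)) hsmooth x
    have hFder : ∀ β : Fin n → ℕ,
        Fder n (fun i y => Real.exp (t i * y)) β x
          = (∏ i, (t i) ^ (β i)) * ∏ i, Real.exp (t i * x) := by
      intro β
      unfold Fder
      rw [← Finset.prod_mul_distrib]
      exact Finset.prod_congr rfl fun i _ => by rw [iteratedDeriv_exp_mul]
    have hsupp : (Function.support fun β : Fin n → ℕ =>
        a β x * Fder n (fun i y => Real.exp (t i * y)) β x) ⊆ ↑s := by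
      intro β hβ
      simp only [Function.mem_support] at hβ
      have : a β ≠ 0 := by
        intro h
        apply hβ
        rw [h]
        simp
      simpa [hs] using this
    rw [finsum_eq_finset_sum_of_support_subset _ hsupp] at h0
    have hE : (∏ i, Real.exp (t i * x)) ≠ 0 :=
      Finset.prod_ne_zero_iff.2 fun i _ => (Real.exp_pos _).ne'
    have : (∑ β ∈ s, a β x * ∏ i, (t i) ^ (β i)) * (∏ i, Real.exp (t i * x)) = 0 := by
      rw [Finset.sum_mul]
      rw [← h0]
      exact Finset.sum_congr rfl fun β _ => by rw [hFder β]; ring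
    exact (mul_eq_zero.1 this).resolve_right hE
  -- Turn into an MvPolynomial identity.
  set e := (Finsupp.equivFunOnFinite (α := Fin n) (M := ℕ)).symm with he
  set p : MvPolynomial (Fin n) ℝ :=
    ∑ β ∈ s, MvPolynomial.monomial (e β) (a β x) with hp
  have heval : ∀ t : Fin n → ℝ, MvPolynomial.eval t p = 0 := by
    intro t
    rw [hp, map_sum]
    rw [← key t]
    refine Finset.sum_congr rfl fun β _ => ?_
    rw [MvPolynomial.eval_monomial]
    congr 1
    rw [Finsupp.prod_fintype]
    · rfl
    · intro i; simp
  have hp0 : p = 0 := by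
    apply MvPolynomial.funext
    intro t
    rw [heval t, map_zero]
  have hcoeff : MvPolynomial.coeff (e α) p = a α x := by
    rw [hp, MvPolynomial.coeff_sum]
    rw [Finset.sum_eq_single α]
    · rw [MvPolynomial.coeff_monomial, if_pos rfl]
    · intro β hβ hne
      rw [MvPolynomial.coeff_monomial, if_neg]
      exact fun h => hne (e.injective h)
    · intro h; exact absurd hα h
  rw [hp0] at hcoeff
  simpa using hcoeff.symm
end
end

section
/- Suppose δ = k ∈ ℕ with k ≥ 1, and suppose −2λ ∉ {0, 1, …, k−1}ⁿ, i.e. there exists an index i such that 2λ_i + j ≠ 0 for every j ∈ {0, 1, …, k−1}. Let (B_α) be real constants indexed by {α : |α| = k} and (C_β) real constants indexed by {β : |β| = k − 1}. Then there exists a family of real constants (D_α) supported on {α : |α| = k} such that for every polynomial h of degree ≤ 2, all smooth F and all x: Σ_{|β|=k−1} C_β h″(x) F^{(β)}(x) = ∂b(X_h, F)(x), where b(F) = Σ_{|α|=k} D_α F^{(α)}. Consequently the cocycle Σ_{|α|=k} B_α h′ F^{(α)} + Σ_{|β|=k−1} C_β h″ F^{(β)} equals Σ_{|α|=k} B_α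 h′ F^{(α)} up to a coboundary. -/
open scoped BigOperators

noncomputable section

namespace SL2Aux

open Finset

variable {n : ℕ}

/-- coefficient `e(m,l) = m(m-1)/2 + l m`. -/
def eco (m : ℕ) (l : ℝ) : ℝ := (m : ℝ) * ((m : ℝ) - 1) / 2 + l * m

lemma eco_zero (l : ℝ) : eco 0 l = 0 := by simp [eco]

lemma hasDerivAt_quad (a b c x : ℝ) :
    HasDerivAt (fun y : ℝ => a + b * y + c * y ^ 2) (b + 2 * c * x) x := by
  have h1 : HasDerivAt (fun y : ℝ => a + b * y + c * y ^ 2)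
      (0 + b * 1 + c * (2 * x)) x := by
    exact (((hasDerivAt_const x a).add ((hasDerivAt_id x).const_mul b)).add
      (((hasDerivAt_pow 2 x)).const_mul c)).congr_deriv (by ring)
  exact h1.congr_deriv (by ring)

lemma deriv_quad (a b c : ℝ) :
    deriv (fun y : ℝ => a + b * y + c * y ^ 2) = fun x => b + 2 * c * x := by
  funext x; exact (hasDerivAt_quad a b c x).deriv

lemma hasDerivAt_lin (b c x : ℝ) :
    HasDerivAt (fun y : ℝ => b + 2 * c * y) (2 * c) x := by
  have := (hasDerivAt_const x b).add ((hasDerivAt_id x).const_mul (2 * c))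
  exact this.congr_deriv (by ring)

lemma deriv_deriv_quad (a b c : ℝ) :
    deriv (deriv (fun y : ℝ => a + b * y + c * y ^ 2)) = fun _ => 2 * c := by
  rw [deriv_quad]; funext x; exact (hasDerivAt_lin b c x).deriv

lemma iteratedDeriv_subst (a b c l : ℝ) (f : ℝ → ℝ) (hf : ContDiff ℝ (⊤ : ℕ∞) f) (m : ℕ) :
    iteratedDeriv m (fun y => (a + b * y + c * y ^ 2) * deriv f y + l * (b + 2 * c * y) * f y)
      = fun x => (a + b * x + c * x ^ 2) * iteratedDeriv (m + 1) f x
        + ((m : ℝ) + l) * ((b + 2 * c * x) * iteratedDeriv m f x)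
        + eco m l * (2 * c) * iteratedDeriv (m - 1) f x := by
  have hfd : ∀ j : ℕ, Differentiable ℝ (iteratedDeriv j f) := fun j =>
    hf.differentiable_iteratedDeriv j (by exact_mod_cast ENat.natCast_lt_top j)
  have hD : ∀ j : ℕ, ∀ x : ℝ, HasDerivAt (iteratedDeriv j f) (iteratedDeriv (j + 1) f x) x := by
    intro j x; rw [iteratedDeriv_succ]; exact (hfd j x).hasDerivAt
  induction m with
  | zero =>
    funext x
    simp only [iteratedDeriv_zero, iteratedDeriv_one, eco]
    push_cast
    ring_nf
    simp [iteratedDeriv_one]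
  | succ m ih =>
    rw [iteratedDeriv_succ, ih]
    funext x
    have H : HasDerivAt (fun x => (a + b * x + c * x ^ 2) * iteratedDeriv (m + 1) f x
        + ((m : ℝ) + l) * ((b + 2 * c * x) * iteratedDeriv m f x)
        + eco m l * (2 * c) * iteratedDeriv (m - 1) f x)
        (((b + 2 * c * x) * iteratedDeriv (m + 1) f x
            + (a + b * x + c * x ^ 2) * iteratedDeriv (m + 1 + 1) f x)
          + ((m : ℝ) + l) * ((2 * c) * iteratedDeriv m f x
            + (b + 2 * c * x) * iteratedDeriv (m + 1) f x)
          + eco m l * (2 * c) * iteratedDeriv (m - 1 + 1) f x) x :=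
      (((hasDerivAt_quad a b c x).mul (hD (m + 1) x)).add
        (((hasDerivAt_lin b c x).mul (hD m x)).const_mul ((m : ℝ) + l))).add
        ((hD (m - 1) x).const_mul (eco m l * (2 * c)))
    rw [H.deriv]
    have hfix : eco m l * (2 * c) * iteratedDeriv (m - 1 + 1) f x
        = eco m l * (2 * c) * iteratedDeriv m f x := by
      cases m with
      | zero => simp [eco]
      | succ p => norm_num
    rw [hfix]
    have h1 : ((m + 1 : ℕ) : ℝ) = (m : ℝ) + 1 := by push_cast; ring
    have h2 : (m + 1 : ℕ) - 1 = m := by omega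
    rw [h1, h2]
    simp only [eco]
    push_cast
    ring


lemma Fder_update_index (F : Fin n → ℝ → ℝ) (α : Fin n → ℕ) (i : Fin n) (v : ℕ) (x : ℝ) :
    Fder n F (Function.update α i v) x
      = iteratedDeriv v (F i) x * ∏ j ∈ Finset.univ.erase i, iteratedDeriv (α j) (F j) x := by
  unfold Fder
  have key : ∀ j, iteratedDeriv (Function.update α i v j) (F j) x
      = Function.update (fun k => iteratedDeriv (α k) (F k) x) i (iteratedDeriv v (F i) x) j :=
    fun j => Function.apply_update (fun k a => iteratedDeriv a (F k) x) α i v j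
  simp only [key]
  rw [Finset.prod_update_of_mem (Finset.mem_univ i)]
  congr 1
  simp [Finset.sdiff_singleton_eq_erase]

lemma Fder_eq_mul_erase (F : Fin n → ℝ → ℝ) (α : Fin n → ℕ) (i : Fin n) (x : ℝ) :
    Fder n F α x
      = iteratedDeriv (α i) (F i) x * ∏ j ∈ Finset.univ.erase i, iteratedDeriv (α j) (F j) x := by
  unfold Fder
  exact (Finset.mul_prod_erase _ _ (Finset.mem_univ i)).symm

lemma Fder_differentiable (F : Fin n → ℝ → ℝ) (hF : ∀ i, ContDiff ℝ (⊤ : ℕ∞) (F i)) (α : Fin n → ℕ) :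
    Differentiable ℝ (Fder n F α) := by
  intro x
  have : ∀ i ∈ (Finset.univ : Finset (Fin n)), HasDerivAt (fun y => iteratedDeriv (α i) (F i) y)
      (deriv (iteratedDeriv (α i) (F i)) x) x := fun i _ =>
    (((hF i).differentiable_iteratedDeriv (α i) (by exact_mod_cast ENat.natCast_lt_top (α i))) x).hasDerivAt
  exact (HasDerivAt.fun_finsetProd this).differentiableAt

lemma deriv_Fder (F : Fin n → ℝ → ℝ) (hF : ∀ i, ContDiff ℝ (⊤ : ℕ∞) (F i)) (α : Fin n → ℕ) (x : ℝ) :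
    deriv (Fder n F α) x = ∑ i, Fder n F (Function.update α i (α i + 1)) x := by
  have hD : ∀ i ∈ (Finset.univ : Finset (Fin n)), HasDerivAt (fun y => iteratedDeriv (α i) (F i) y)
      (iteratedDeriv (α i + 1) (F i) x) x := by
    intro i _
    rw [iteratedDeriv_succ]
    exact (((hF i).differentiable_iteratedDeriv (α i) (by exact_mod_cast ENat.natCast_lt_top (α i))) x).hasDerivAt
  have H := HasDerivAt.fun_finsetProd hD
  have : deriv (Fder n F α) x
      = ∑ i, (∏ j ∈ Finset.univ.erase i, iteratedDeriv (α j) (F j) x) • iteratedDeriv (α i + 1) (F i) x := by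
    exact H.deriv
  rw [this]
  refine Finset.sum_congr rfl fun i _ => ?_
  rw [Fder_update_index, smul_eq_mul, mul_comm]

lemma opOf_eq (D : (Fin n → ℕ) → ℝ) (k : ℕ) (hD : ∀ α, (∑ i, α i) ≠ k → D α = 0)
    (F : Fin n → ℝ → ℝ) (x : ℝ) :
    opOf n (fun α _ => D α) F x
      = ∑ α ∈ Finset.Nat.antidiagonalTuple n k, D α * Fder n F α x := by
  apply finsum_eq_sum_of_support_subset
  intro α hα
  simp only [Function.mem_support, ne_eq] at hα
  have : D α ≠ 0 := fun h => hα (by simp [h])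
  have hs : (∑ i, α i) = k := by by_contra hc; exact this (hD α hc)
  simpa [Finset.Nat.mem_antidiagonalTuple] using hs

lemma finsum_mem_set_eq (g : (Fin n → ℕ) → ℝ) (m : ℕ) :
    (∑ᶠ β ∈ {β : Fin n → ℕ | (∑ i, β i) = m}, g β)
      = ∑ β ∈ Finset.Nat.antidiagonalTuple n m, g β := by
  rw [← finsum_mem_coe_finset]
  congr 1
  ext β
  simp [Finset.Nat.mem_antidiagonalTuple]


lemma sum_update_nat (α : Fin n → ℕ) (i : Fin n) (v : ℕ) :
    (∑ j, Function.update α i v j) + α i = (∑ j, α j) + v := by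
  rw [Finset.sum_update_of_mem (Finset.mem_univ i)]
  rw [← Finset.sum_erase_add Finset.univ α (Finset.mem_univ i)]
  simp only [Finset.sdiff_singleton_eq_erase]
  omega

lemma Fder_subst (a b c li : ℝ) (F : Fin n → ℝ → ℝ) (i : Fin n) (hFi : ContDiff ℝ (⊤ : ℕ∞) (F i))
    (α : Fin n → ℕ) (x : ℝ) :
    Fder n (Function.update F i
        (fun y => (a + b * y + c * y ^ 2) * deriv (F i) y + li * (b + 2 * c * y) * F i y)) α x
      = (a + b * x + c * x ^ 2) * Fder n F (Function.update α i (α i + 1)) x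
        + ((α i : ℝ) + li) * ((b + 2 * c * x) * Fder n F α x)
        + eco (α i) li * (2 * c) * Fder n F (Function.update α i (α i - 1)) x := by
  set g : ℝ → ℝ :=
    fun y => (a + b * y + c * y ^ 2) * deriv (F i) y + li * (b + 2 * c * y) * F i y with hg
  have h1 : Fder n (Function.update F i g) α x
      = iteratedDeriv (α i) g x * ∏ j ∈ Finset.univ.erase i, iteratedDeriv (α j) (F j) x := by
    unfold Fder
    have key : ∀ j, iteratedDeriv (α j) (Function.update F i g j) x
        = Function.update (fun k => iteratedDeriv (α k) (F k) x) i (iteratedDeriv (α i) g x) j :=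
      fun j => Function.apply_update (fun k u => iteratedDeriv (α k) u x) F i g j
    simp only [key]
    rw [Finset.prod_update_of_mem (Finset.mem_univ i)]
    congr 1
    simp [Finset.sdiff_singleton_eq_erase]
  have h2 : iteratedDeriv (α i) g x
      = (a + b * x + c * x ^ 2) * iteratedDeriv (α i + 1) (F i) x
        + ((α i : ℝ) + li) * ((b + 2 * c * x) * iteratedDeriv (α i) (F i) x)
        + eco (α i) li * (2 * c) * iteratedDeriv (α i - 1) (F i) x := by
    rw [hg]
    exact congrFun (iteratedDeriv_subst a b c li (F i) hFi (α i)) x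
  rw [h1, h2, Fder_update_index, Fder_update_index, Fder_eq_mul_erase F α i]
  ring

/-- Recursive construction of the coefficients `D`. -/
def Daux (i0 : Fin n) (lam : Fin n → ℝ) (C : (Fin n → ℕ) → ℝ) : ℕ → (Fin n → ℕ) → ℝ
  | 0 => fun _ => 0
  | (m + 1) => fun α =>
      (-C (Function.update α i0 m)
        - ∑ i ∈ Finset.univ.erase i0,
            eco (Function.update α i0 m i + 1) (lam i)
              * Daux i0 lam C m
                  (Function.update (Function.update α i0 m) i (Function.update α i0 m i + 1)))
        / eco (m + 1) (lam i0)

def Dsol (i0 : Fin n) (lam : Fin n → ℝ) (C : (Fin n → ℕ) → ℝ) (k : ℕ) (α : Fin n → ℕ) : ℝ :=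
  if (∑ i, α i) = k then Daux i0 lam C (α i0) α else 0

lemma Dsol_supp (i0 : Fin n) (lam : Fin n → ℝ) (C : (Fin n → ℕ) → ℝ) (k : ℕ)
    (α : Fin n → ℕ) (hα : (∑ i, α i) ≠ k) : Dsol i0 lam C k α = 0 := if_neg hα

lemma eco_succ_ne (m : ℕ) (l : ℝ) (h : 2 * l + (m : ℝ) ≠ 0) : eco (m + 1) l ≠ 0 := by
  have he : eco (m + 1) l = ((m : ℝ) + 1) * (2 * l + m) / 2 := by
    simp only [eco]; push_cast; ring
  rw [he]
  have hm : ((m : ℝ) + 1) ≠ 0 := by positivity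
  exact div_ne_zero (mul_ne_zero hm h) two_ne_zero

lemma Dsol_eq (i0 : Fin n) (lam : Fin n → ℝ) (C : (Fin n → ℕ) → ℝ) (k : ℕ) (hk : 1 ≤ k)
    (hlam : ∀ j : ℕ, j < k → 2 * lam i0 + (j : ℝ) ≠ 0)
    (β : Fin n → ℕ) (hβ : (∑ i, β i) = k - 1) :
    ∑ i, eco (β i + 1) (lam i) * Dsol i0 lam C k (Function.update β i (β i + 1)) = - C β := by
  have hsum : ∀ i, (∑ j, Function.update β i (β i + 1) j) = k := by
    intro i
    have := sum_update_nat β i (β i + 1)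
    omega
  have hβi0 : β i0 < k := by
    have h1 : β i0 ≤ ∑ i, β i :=
      Finset.single_le_sum (fun i _ => Nat.zero_le (β i)) (Finset.mem_univ i0)
    omega
  have hne : eco (β i0 + 1) (lam i0) ≠ 0 := eco_succ_ne _ _ (hlam (β i0) hβi0)
  rw [← Finset.add_sum_erase _ _ (Finset.mem_univ i0)]
  have htail : ∀ i ∈ Finset.univ.erase i0,
      eco (β i + 1) (lam i) * Dsol i0 lam C k (Function.update β i (β i + 1))
        = eco (β i + 1) (lam i) * Daux i0 lam C (β i0) (Function.update β i (β i + 1)) := by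
    intro i hi
    have hine : i0 ≠ i := (Finset.ne_of_mem_erase hi).symm
    unfold Dsol
    rw [if_pos (hsum i), Function.update_of_ne hine]
  rw [Finset.sum_congr rfl htail]
  have hhead : Dsol i0 lam C k (Function.update β i0 (β i0 + 1))
      = (-C β - ∑ i ∈ Finset.univ.erase i0,
            eco (β i + 1) (lam i) * Daux i0 lam C (β i0) (Function.update β i (β i + 1)))
          / eco (β i0 + 1) (lam i0) := by
    unfold Dsol
    rw [if_pos (hsum i0), Function.update_self]
    have hupd : Function.update (Function.update β i0 (β i0 + 1)) i0 (β i0) = β := by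
      rw [Function.update_idem, Function.update_eq_self]
    rw [Daux]
    simp only [hupd]
  rw [hhead]
  field_simp
  ring


lemma reindex (lam : Fin n → ℝ) (D : (Fin n → ℕ) → ℝ) (k : ℕ) (hk : 1 ≤ k)
    (c : ℝ) (F : Fin n → ℝ → ℝ) (x : ℝ) :
    ∑ α ∈ Finset.Nat.antidiagonalTuple n k,
        (- D α) * (∑ i, eco (α i) (lam i) * ((2 * c) * Fder n F (Function.update α i (α i - 1)) x))
      = ∑ β ∈ Finset.Nat.antidiagonalTuple n (k - 1),
          (- ∑ i, eco (β i + 1) (lam i) * D (Function.update β i (β i + 1)))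
            * (2 * c) * Fder n F β x := by
  have hR : ∀ β : Fin n → ℕ,
      (- ∑ i, eco (β i + 1) (lam i) * D (Function.update β i (β i + 1))) * (2 * c) * Fder n F β x
        = ∑ i, (-(eco (β i + 1) (lam i) * D (Function.update β i (β i + 1)))) * (2 * c) * Fder n F β x := by
    intro β
    rw [← Finset.sum_neg_distrib, Finset.sum_mul, Finset.sum_mul]
  simp only [hR, Finset.mul_sum]
  rw [Finset.sum_comm, Finset.sum_comm (s := Finset.Nat.antidiagonalTuple n (k-1))]
  refine Finset.sum_congr rfl fun i _ => ?_
  rw [← Finset.sum_filter_of_ne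
    (p := fun α => 0 < α i)
    (f := fun α => -D α * (eco (α i) (lam i) * (2 * c * Fder n F (Function.update α i (α i - 1)) x)))
    (by
      intro α _ hne
      by_contra hz
      push_neg at hz
      have h0 : α i = 0 := by omega
      apply hne
      rw [h0, eco_zero]
      ring)]
  refine Finset.sum_nbij' (fun α => Function.update α i (α i - 1))
    (fun β => Function.update β i (β i + 1)) ?_ ?_ ?_ ?_ ?_
  · intro α hα
    rw [Finset.mem_filter, Finset.Nat.mem_antidiagonalTuple] at hα
    rw [Finset.Nat.mem_antidiagonalTuple]
    have := sum_update_nat α i (α i - 1)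
    omega
  · intro β hβ
    rw [Finset.Nat.mem_antidiagonalTuple] at hβ
    rw [Finset.mem_filter, Finset.Nat.mem_antidiagonalTuple]
    constructor
    · have := sum_update_nat β i (β i + 1); omega
    · rw [Function.update_self]; omega
  · intro α hα
    rw [Finset.mem_filter] at hα
    rw [Function.update_self, Function.update_idem]
    rw [show α i - 1 + 1 = α i from by omega, Function.update_eq_self]
  · intro β _
    rw [Function.update_self, Function.update_idem]
    rw [show β i + 1 - 1 = β i from by omega, Function.update_eq_self]
  · intro α hα
    rw [Finset.mem_filter] at hα
    have h1 : Function.update α i (α i - 1) i = α i - 1 := Function.update_self _ _ _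
    rw [h1, show α i - 1 + 1 = α i from by omega, Function.update_idem,
      Function.update_eq_self]
    ring


lemma cobound_eval (lam : Fin n → ℝ) (μ : ℝ) (D : (Fin n → ℕ) → ℝ) (k : ℕ) (hk : 1 ≤ k)
    (hD : ∀ α, (∑ i, α i) ≠ k → D α = 0) (hδ : μ - ∑ i, lam i = (k : ℝ))
    (a b c : ℝ) (F : Fin n → ℝ → ℝ) (hF : ∀ i, ContDiff ℝ (⊤ : ℕ∞) (F i)) (x : ℝ) :
    cobound n lam μ (fun α _ => D α) (fun y => a + b * y + c * y ^ 2) F x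
      = ∑ β ∈ Finset.Nat.antidiagonalTuple n (k - 1),
          (- ∑ i, eco (β i + 1) (lam i) * D (Function.update β i (β i + 1)))
            * (2 * c) * Fder n F β x := by
  rw [← reindex lam D k hk c F x]
  have hop : ∀ (G : Fin n → ℝ → ℝ) (y : ℝ), opOf n (fun α _ => D α) G y
      = ∑ α ∈ Finset.Nat.antidiagonalTuple n k, D α * Fder n G α y := fun G y =>
    opOf_eq D k hD G y
  simp only [cobound, act, hop, deriv_quad]
  have hder : deriv (fun y => ∑ α ∈ Finset.Nat.antidiagonalTuple n k, D α * Fder n F α y) x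
      = ∑ α ∈ Finset.Nat.antidiagonalTuple n k,
          D α * (∑ i, Fder n F (Function.update α i (α i + 1)) x) := by
    rw [deriv_fun_sum (fun α _ => (Fder_differentiable F hF α x).const_mul (D α))]
    refine Finset.sum_congr rfl fun α _ => ?_
    rw [deriv_const_mul (D α) (Fder_differentiable F hF α x), deriv_Fder F hF α x]
  rw [hder]
  have hsub : ∀ (i : Fin n) (α : Fin n → ℕ),
      Fder n (Function.update F i
        (fun y => (a + b * y + c * y ^ 2) * deriv (F i) y + lam i * (b + 2 * c * y) * F i y)) α x
      = (a + b * x + c * x ^ 2) * Fder n F (Function.update α i (α i + 1)) x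
        + ((α i : ℝ) + lam i) * ((b + 2 * c * x) * Fder n F α x)
        + eco (α i) (lam i) * (2 * c) * Fder n F (Function.update α i (α i - 1)) x :=
    fun i α => Fder_subst a b c (lam i) F i (hF i) α x
  simp only [hsub]
  rw [Finset.sum_comm]
  rw [Finset.mul_sum, Finset.mul_sum, ← Finset.sum_add_distrib, ← Finset.sum_sub_distrib]
  refine Finset.sum_congr rfl fun α hα => ?_
  have hαk : (∑ i, α i) = k := Finset.Nat.mem_antidiagonalTuple.mp hα
  have hμ : ∑ i, ((α i : ℝ) + lam i) = μ := by
    rw [Finset.sum_add_distrib, ← Nat.cast_sum, hαk]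
    linarith
  simp only [mul_add, Finset.sum_add_distrib]
  have e1 : ∑ i, D α * ((a + b * x + c * x ^ 2) * Fder n F (Function.update α i (α i + 1)) x)
      = D α * ((a + b * x + c * x ^ 2) * ∑ i, Fder n F (Function.update α i (α i + 1)) x) := by
    simp [Finset.mul_sum]
  have e2 : ∑ i, D α * (((α i : ℝ) + lam i) * ((b + 2 * c * x) * Fder n F α x))
      = (∑ i, ((α i : ℝ) + lam i)) * (D α * ((b + 2 * c * x) * Fder n F α x)) := by
    rw [Finset.sum_mul]
    exact Finset.sum_congr rfl fun i _ => by ring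
  have e3 : ∑ i, D α * (eco (α i) (lam i) * (2 * c) * Fder n F (Function.update α i (α i - 1)) x)
      = D α * ∑ i, eco (α i) (lam i) * ((2 * c) * Fder n F (Function.update α i (α i - 1)) x) := by
    rw [Finset.mul_sum]
    exact Finset.sum_congr rfl fun i _ => by ring
  rw [e1, e2, e3, hμ]
  ring

end SL2Aux

/-- Theorem 2.3: if `δ = k ≥ 1` and some `λᵢ` satisfies
`2λᵢ + j ≠ 0` for all `j ∈ {0,…,k−1}` (i.e. `−2λ ∉ {0,…,k−1}ⁿ`), then the `h''`-part
`Σ_{|β|=k−1} C_β h'' F^{(β)}` of the cocycle is the coboundary of an operator with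
constant coefficients supported on `{α : |α| = k}`; consequently the cocycle
`Σ_{|α|=k} B_α h' F^{(α)} + Σ_{|β|=k−1} C_β h'' F^{(β)}` equals `Σ_{|α|=k} B_α h' F^{(α)}`
up to a coboundary. -/
theorem second_order_term_is_coboundary (n : ℕ) (hn : 1 ≤ n) (lam : Fin n → ℝ) (μ : ℝ)
    (k : ℕ) (hk : 1 ≤ k) (hδ : μ - ∑ i, lam i = (k : ℝ))
    (hlam : ∃ i : Fin n, ∀ j : ℕ, j < k → 2 * lam i + (j : ℝ) ≠ 0)
    (B C : (Fin n → ℕ) → ℝ)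
    (hBsupp : ∀ α : Fin n → ℕ, (∑ i, α i) ≠ k → B α = 0)
    (hCsupp : ∀ β : Fin n → ℕ, (∑ i, β i) ≠ k - 1 → C β = 0) :
    ∃ D : (Fin n → ℕ) → ℝ,
      (∀ α : Fin n → ℕ, (∑ i, α i) ≠ k → D α = 0) ∧
      ∀ h : ℝ → ℝ, IsSl2 h → ∀ F : Fin n → ℝ → ℝ, (∀ i, ContDiff ℝ (⊤ : ℕ∞) (F i)) → ∀ x : ℝ,
        (∑ᶠ β ∈ {β : Fin n → ℕ | (∑ i, β i) = k - 1},
            C β * deriv (deriv h) x * Fder n F β x)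
          = cobound n lam μ (fun α _ => D α) h F x ∧
        (∑ᶠ α ∈ {α : Fin n → ℕ | (∑ i, α i) = k},
            B α * deriv h x * Fder n F α x)
          + (∑ᶠ β ∈ {β : Fin n → ℕ | (∑ i, β i) = k - 1},
              C β * deriv (deriv h) x * Fder n F β x)
          - cobound n lam μ (fun α _ => D α) h F x
          = ∑ᶠ α ∈ {α : Fin n → ℕ | (∑ i, α i) = k},
              B α * deriv h x * Fder n F α x := by
  obtain ⟨i0, hi0⟩ := hlam
  refine ⟨SL2Aux.Dsol i0 lam C k, fun α hα => SL2Aux.Dsol_supp i0 lam C k α hα, ?_⟩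
  intro h hsl2 F hF x
  obtain ⟨a, b, c, rfl⟩ := hsl2
  have key : (∑ᶠ β ∈ {β : Fin n → ℕ | (∑ i, β i) = k - 1},
        C β * deriv (deriv (fun y => a + b * y + c * y ^ 2)) x * Fder n F β x)
      = cobound n lam μ (fun α _ => SL2Aux.Dsol i0 lam C k α)
          (fun y => a + b * y + c * y ^ 2) F x := by
    rw [SL2Aux.cobound_eval lam μ (SL2Aux.Dsol i0 lam C k) k hk
      (SL2Aux.Dsol_supp i0 lam C k) hδ a b c F hF x]
    simp only [SL2Aux.deriv_deriv_quad]
    rw [SL2Aux.finsum_mem_set_eq]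
    refine Finset.sum_congr rfl fun β hβ => ?_
    rw [SL2Aux.Dsol_eq i0 lam C k hk hi0 β (Finset.Nat.mem_antidiagonalTuple.mp hβ), neg_neg]
  exact ⟨key, by rw [key]; ring⟩
end
end

section
/- Suppose μ = λ_1 + ⋯ + λ_n (i.e. δ = 0). Then the 1-cochain C_0(X_h, F)(x) = h′(x) f_1(x)⋯f_n(x) satisfies the 1-cocycle condition but is not a coboundary: there is no finitely supported family (D_α) of smooth functions ℝ → ℝ such that h′(x) f_1(x)⋯f_n(x) = ∂b(X_h, F)(x) for every polynomial h of degree ≤ 2, all smooth f_1,…,f_n and all x, where b(F) = Σ_α D_α F^{(α)}. -/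
open scoped BigOperators

noncomputable section

private lemma hasDerivAt_poly2 (a b c x : ℝ) :
    HasDerivAt (fun x : ℝ => a + b * x + c * x ^ 2) (b + 2 * c * x) x := by
  have h : HasDerivAt (fun x : ℝ => a + b * x + c * x ^ 2)
      (0 + b * 1 + c * (((2 : ℕ) : ℝ) * x ^ (2 - 1))) x :=
    ((hasDerivAt_const x a).add ((hasDerivAt_id x).const_mul b)).add
    ((hasDerivAt_pow 2 x).const_mul c)
  convert h using 1
  simp; ring

private lemma deriv_poly2 (a b c : ℝ) :
    deriv (fun x : ℝ => a + b * x + c * x ^ 2) = fun x => b + 2 * c * x :=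
  funext fun x => (hasDerivAt_poly2 a b c x).deriv

private lemma prod_update_eval {n : ℕ} (F : Fin n → ℝ → ℝ) (i : Fin n) (g : ℝ → ℝ) (x : ℝ) :
    ∏ j, Function.update F i g j x = g x * ∏ j ∈ Finset.univ.erase i, F j x := by
  have h : (fun j => Function.update F i g j x)
      = Function.update (fun j => F j x) i (g x) := by
    funext j
    by_cases hj : j = i
    · subst hj; simp
    · simp [Function.update_of_ne hj]
  calc ∏ j, Function.update F i g j x
      = ∏ j, Function.update (fun j => F j x) i (g x) j := by rw [h]
    _ = g x * ∏ j ∈ Finset.univ.erase i, F j x := by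
        simpa [Finset.sdiff_singleton_eq_erase] using
          Finset.prod_update_of_mem (Finset.mem_univ i) (fun j => F j x) (g x)

private lemma act_C0 (n : ℕ) (lam : Fin n → ℝ) (μ : ℝ) (hμ : μ = ∑ i, lam i)
    (a₁ b₁ c₁ b₂ c₂ : ℝ) (F : Fin n → ℝ → ℝ) (hF : ∀ i, ContDiff ℝ (⊤ : ℕ∞) (F i)) (x : ℝ) :
    act n lam μ (fun G y => (b₂ + 2 * c₂ * y) * ∏ i, G i y)
      (fun x => a₁ + b₁ * x + c₁ * x ^ 2) F x
    = (a₁ + b₁ * x + c₁ * x ^ 2) * (2 * c₂) * ∏ i, F i x := by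
  have hFd : ∀ i, ∀ y : ℝ, HasDerivAt (F i) (deriv (F i) y) y := fun i y =>
    (((hF i).differentiable (by simp)) y).hasDerivAt
  have hP : HasDerivAt (fun y => ∏ i, F i y)
      (∑ i, (∏ j ∈ Finset.univ.erase i, F j x) • deriv (F i) x) x :=
    HasDerivAt.fun_finsetProd (fun i _ => hFd i x)
  have hd₂ : HasDerivAt (fun y : ℝ => b₂ + 2 * c₂ * y) (2 * c₂) x := by
    simpa using (hasDerivAt_const x b₂).fun_add ((hasDerivAt_id x).const_mul (2 * c₂))
  have hmain : deriv (fun y => (b₂ + 2 * c₂ * y) * ∏ i, F i y) x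
      = 2 * c₂ * ∏ i, F i x + (b₂ + 2 * c₂ * x) *
          ∑ i, (∏ j ∈ Finset.univ.erase i, F j x) • deriv (F i) x :=
    (hd₂.mul hP).deriv
  unfold act
  rw [hmain, deriv_poly2]
  have hsum : ∀ i : Fin n,
      (b₂ + 2 * c₂ * x) * ∏ j, Function.update F i
        (fun y => (a₁ + b₁ * y + c₁ * y ^ 2) * deriv (F i) y
          + lam i * (b₁ + 2 * c₁ * y) * F i y) j x
      = (a₁ + b₁ * x + c₁ * x ^ 2) * (b₂ + 2 * c₂ * x) *
          ((∏ j ∈ Finset.univ.erase i, F j x) * deriv (F i) x)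
        + lam i * ((b₁ + 2 * c₁ * x) * (b₂ + 2 * c₂ * x) * ∏ j, F j x) := by
    intro i
    rw [prod_update_eval]
    rw [show (∏ j, F j x) = F i x * ∏ j ∈ Finset.univ.erase i, F j x from
      (Finset.mul_prod_erase Finset.univ (fun j => F j x) (Finset.mem_univ i)).symm]
    ring
  simp only []
  rw [Finset.sum_congr rfl (fun i _ => hsum i), Finset.sum_add_distrib,
    ← Finset.sum_mul, ← hμ]
  simp only [smul_eq_mul]
  rw [← Finset.mul_sum]
  ring

private lemma iteratedDeriv_const' (m : ℕ) (k : ℝ) (x : ℝ) :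
    iteratedDeriv m (fun _ : ℝ => k) x = if m = 0 then k else 0 := by
  induction m generalizing k with
  | zero => simp [iteratedDeriv_zero]
  | succ m ih =>
    rw [iteratedDeriv_succ']
    simp only [deriv_const']
    rw [ih 0]
    simp

private lemma opOf_const (n : ℕ) (D : (Fin n → ℕ) → ℝ → ℝ) (k : Fin n → ℝ) (x : ℝ) :
    opOf n D (fun i _ => k i) x = D 0 x * ∏ i, k i := by
  unfold opOf
  rw [finsum_eq_single _ (0 : Fin n → ℕ)]
  · unfold Fder
    simp [iteratedDeriv_zero]
  · intro α hα
    obtain ⟨i, hi⟩ := Function.ne_iff.mp hα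
    have : Fder n (fun i _ => k i) α x = 0 := by
      apply Finset.prod_eq_zero (Finset.mem_univ i)
      rw [iteratedDeriv_const']
      simp only [Pi.zero_apply] at hi
      simp [hi]
    rw [this, mul_zero]

/-- for `δ = 0`, i.e. `μ = λ₁ + ⋯ + λ_n`, the 1-cochain
`C₀(X_h, F) = h' f₁ ⋯ f_n` is a 1-cocycle which is not a coboundary (it spans
`H¹(sl(2), D_{λ,μ})`). -/
theorem C0_nontrivial_cocycle (n : ℕ) (hn : 1 ≤ n) (lam : Fin n → ℝ) (μ : ℝ)
    (hδ : μ = ∑ i, lam i) :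
    IsCocycle n lam μ (fun h F x => deriv h x * ∏ i, F i x) ∧
    ¬ ∃ D : (Fin n → ℕ) → ℝ → ℝ,
        {α | D α ≠ 0}.Finite ∧ (∀ α, ContDiff ℝ (⊤ : ℕ∞) (D α)) ∧
        ∀ h : ℝ → ℝ, IsSl2 h → ∀ F : Fin n → ℝ → ℝ, (∀ i, ContDiff ℝ (⊤ : ℕ∞) (F i)) → ∀ x : ℝ,
          deriv h x * ∏ i, F i x = cobound n lam μ D h F x := by
  constructor
  · intro h₁ h₂ sl₁ sl₂ F hF x
    obtain ⟨a₁, b₁, c₁, rfl⟩ := sl₁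
    obtain ⟨a₂, b₂, c₂, rfl⟩ := sl₂
    simp only []
    have hbr : (fun y => (a₁ + b₁ * y + c₁ * y ^ 2) *
          deriv (fun x => a₂ + b₂ * x + c₂ * x ^ 2) y
        - deriv (fun x => a₁ + b₁ * x + c₁ * x ^ 2) y * (a₂ + b₂ * y + c₂ * y ^ 2))
        = fun y => (a₁ * b₂ - b₁ * a₂) + (2 * (a₁ * c₂ - c₁ * a₂)) * y
            + (b₁ * c₂ - c₁ * b₂) * y ^ 2 := by
      funext y
      rw [deriv_poly2, deriv_poly2]
      simp only []
      ring
    rw [hbr, deriv_poly2, deriv_poly2, deriv_poly2]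
    simp only []
    rw [act_C0 n lam μ hδ a₁ b₁ c₁ b₂ c₂ F hF x,
      act_C0 n lam μ hδ a₂ b₂ c₂ b₁ c₁ F hF x]
    ring
  · rintro ⟨D, -, -, hco⟩
    have key := hco (fun x => x) ⟨0, 1, 0, by funext x; ring⟩
      (fun _ _ => (1 : ℝ)) (fun _ => contDiff_const) 0
    have e1 : opOf n D (fun _ _ => (1 : ℝ)) 0 = D 0 0 := by
      simpa using opOf_const n D (fun _ => 1) 0
    have e2 : ∀ i : Fin n,
        opOf n D (Function.update (fun _ _ => (1 : ℝ)) i (fun _ => lam i)) 0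
          = D 0 0 * lam i := by
      intro i
      have hu : Function.update (fun _ _ => (1 : ℝ) : Fin n → ℝ → ℝ) i
            (fun _ : ℝ => lam i)
          = fun j (_ : ℝ) => Function.update (fun _ : Fin n => (1 : ℝ)) i (lam i) j := by
        funext j y
        by_cases hj : j = i
        · subst hj; simp
        · simp [Function.update_of_ne hj]
      rw [hu, opOf_const]
      congr 1
      rw [Finset.prod_update_of_mem (Finset.mem_univ i)]
      simp
    simp only [cobound, act, deriv_id'', deriv_const', mul_zero, zero_add, mul_one,
      zero_mul, Finset.prod_const_one, one_mul] at key
    rw [e1, Finset.sum_congr rfl (fun i _ => e2 i), ← Finset.mul_sum, ← hδ] at key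
    exact one_ne_zero (by linear_combination key)
end
end
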